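/- Let 𝒜 ⊆ ℕ be a sequence and h ≥ 1 an integer. Then M_*(s_{𝒜,h}) = h·M_*(A) and M^*(s_{𝒜,h}) = h·M^*(A), where the equalities are taken in [0,+∞] (with h·(+∞) = +∞). -/

import Mathlib

open Filter Asymptotics MeasureTheory

/-- Counting function `A(x) = |𝒜 ∩ [0,x]|`. -/
noncomputable def cntA (A : Set ℕ) (x : ℝ) : ℕ :=
  {n : ℕ | n ∈ A ∧ (n : ℝ) ≤ x}.ncard

/-- The increasing enumeration `a₀ < a₁ < ⋯` of a set `A ⊆ ℕ`. -/
noncomputable def seqA (A : Set ℕ) (n : ℕ) : ℕ := Nat.nth (· ∈ A) n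

/-- `A` is an OR sequence: `A(2x) = O(A(x))`. -/
def ORseq (A : Set ℕ) : Prop :=
  (fun x : ℝ => (cntA A (2 * x) : ℝ)) =O[atTop] (fun x : ℝ => (cntA A x : ℝ))

/-- `A` is a PI sequence: `a_{2n} = O(a_n)`. -/
def PIseq (A : Set ℕ) : Prop :=
  (fun n : ℕ => (seqA A (2 * n) : ℝ)) =O[atTop] (fun n : ℕ => (seqA A n : ℝ))

/-- `A` is an OR₊ sequence: an infinite subset of ℕ that is both OR and PI. -/
def ORplus (A : Set ℕ) : Prop := A.Infinite ∧ ORseq A ∧ PIseq A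

/-- `sA A h x` is the number of ordered `h`-tuples of elements of `A` with sum at most `x`. -/
noncomputable def sA (A : Set ℕ) (h : ℕ) (x : ℝ) : ℕ :=
  {t : Fin h → ℕ | (∀ i, t i ∈ A) ∧ ((∑ i, t i : ℕ) : ℝ) ≤ x}.ncard

/-- `f` is almost increasing (on some tail `[x₀, ∞)`): there is `m > 0` with
`f(y) ≥ m·f(x)` for all `y ≥ x ≥ x₀`. -/
def AlmostIncreasing (f : ℝ → ℝ) : Prop :=
  ∃ m : ℝ, 0 < m ∧ ∃ x₀ : ℝ, ∀ x y : ℝ, x₀ ≤ x → x ≤ y → m * f x ≤ f y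

/-- `f` has positive increase: `x^{-γ} f(x)` is almost increasing for some `γ > 0`. -/
def PositiveIncrease (f : ℝ → ℝ) : Prop :=
  ∃ γ : ℝ, 0 < γ ∧ AlmostIncreasing (fun x : ℝ => x ^ (-γ) * f x)

/-- `f` is almost decreasing (on some tail `[x₀, ∞)`): there is `M > 0` with
`f(y) ≤ M·f(x)` for all `y ≥ x ≥ x₀`. -/
def AlmostDecreasing (f : ℝ → ℝ) : Prop :=
  ∃ M : ℝ, 0 < M ∧ ∃ x₀ : ℝ, ∀ x y : ℝ, x₀ ≤ x → x ≤ y → f y ≤ M * f x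

/-- The lower Matuszewska index `M_*(f) = sup {γ ≥ 0 : x^{-γ} f(x) is almost increasing}`,
taken in `[0, +∞]` (with `sup ∅ = 0`). -/
noncomputable def lowerMat (f : ℝ → ℝ) : ENNReal :=
  sSup {g : ENNReal | ∃ γ : NNReal, g = γ ∧
    AlmostIncreasing (fun x : ℝ => x ^ (-(γ : ℝ)) * f x)}

/-- The upper Matuszewska index `M^*(f) = inf {γ ≥ 0 : x^{-γ} f(x) is almost decreasing}`,
taken in `[0, +∞]` (with `inf ∅ = +∞`). -/
noncomputable def upperMat (f : ℝ → ℝ) : ENNReal :=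
  sInf {g : ENNReal | ∃ γ : NNReal, g = γ ∧
    AlmostDecreasing (fun x : ℝ => x ^ (-(γ : ℝ)) * f x)}

/-!
A tuple with sum at most `x` has all its entries in `𝒜 ∩ [0, x]`, and a tuple with entries in
`𝒜 ∩ [0, x]` has sum at most `h x`; hence `s_{𝒜,h}(x) ≤ A(x)^h ≤ s_{𝒜,h}(h x)`. Matuszewska
indices of nondecreasing functions do not see such bounded dilations, and raising a function to
the power `h` multiplies both of its indices by `h`.
-/

section Counting

variable (A : Set ℕ) (h : ℕ)

lemma finite_setOf_mem_and_cast_le (x : ℝ) : {n : ℕ | n ∈ A ∧ (n : ℝ) ≤ x}.Finite :=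
  (Set.finite_Iic ⌈x⌉₊).subset fun _ hn => Nat.cast_le.mp (hn.2.trans (Nat.le_ceil x))

lemma cntA_mono : Monotone (cntA A) := fun _ y hxy =>
  Set.ncard_le_ncard (fun _ hn => ⟨hn.1, hn.2.trans hxy⟩) (finite_setOf_mem_and_cast_le A y)

lemma setOf_sum_le_subset_pi (x : ℝ) :
    {t : Fin h → ℕ | (∀ i, t i ∈ A) ∧ ((∑ i, t i : ℕ) : ℝ) ≤ x} ⊆
      Set.univ.pi fun _ => {n : ℕ | n ∈ A ∧ (n : ℝ) ≤ x} := fun _ ht i _ =>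
  ⟨ht.1 i, le_trans (Nat.cast_le.mpr
    (Finset.single_le_sum (fun _ _ => Nat.zero_le _) (Finset.mem_univ i))) ht.2⟩

lemma finite_pi_setOf_mem_and_cast_le (x : ℝ) :
    (Set.univ.pi fun _ : Fin h => {n : ℕ | n ∈ A ∧ (n : ℝ) ≤ x}).Finite :=
  Set.Finite.pi fun _ => finite_setOf_mem_and_cast_le A x

lemma sA_mono : Monotone (sA A h) := fun _ y hxy =>
  Set.ncard_le_ncard (fun _ ht => ⟨ht.1, ht.2.trans hxy⟩)
    ((finite_pi_setOf_mem_and_cast_le A h y).subset (setOf_sum_le_subset_pi A h y))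

lemma ncard_pi_setOf_mem_and_cast_le (x : ℝ) :
    (Set.univ.pi fun _ : Fin h => {n : ℕ | n ∈ A ∧ (n : ℝ) ≤ x}).ncard = cntA A x ^ h := by
  rw [cntA, ← Nat.card_coe_set_eq, ← Nat.card_coe_set_eq, Nat.card_congr (Equiv.Set.univPi _),
    Nat.card_pi, Finset.prod_const, Finset.card_univ, Fintype.card_fin]

lemma sA_le_cntA_pow (x : ℝ) : sA A h x ≤ cntA A x ^ h := by
  rw [← ncard_pi_setOf_mem_and_cast_le]
  exact Set.ncard_le_ncard (setOf_sum_le_subset_pi A h x) (finite_pi_setOf_mem_and_cast_le A h x)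

lemma cntA_pow_le_sA (x : ℝ) : cntA A x ^ h ≤ sA A h (h * x) := by
  rw [← ncard_pi_setOf_mem_and_cast_le]
  refine Set.ncard_le_ncard (fun t ht => ⟨fun i => (ht i trivial).1, ?_⟩)
    ((finite_pi_setOf_mem_and_cast_le A h _).subset (setOf_sum_le_subset_pi A h _))
  calc ((∑ i, t i : ℕ) : ℝ) = ∑ i, (t i : ℝ) := Nat.cast_sum _ _
    _ ≤ ∑ _i : Fin h, x := Finset.sum_le_sum fun i _ => (ht i trivial).2
    _ = h * x := by simp

end Counting

section AlmostMonotone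

variable {f g : ℝ → ℝ} {p : ℝ}

lemma AlmostIncreasing.congr (H : AlmostIncreasing f) (hfg : f =ᶠ[atTop] g) :
    AlmostIncreasing g := by
  obtain ⟨m, hm, x₀, H⟩ := H
  obtain ⟨x₁, hfg⟩ := eventually_atTop.1 hfg
  refine ⟨m, hm, max x₀ x₁, fun x y hx hxy => ?_⟩
  have hx₁ : x₁ ≤ x := le_of_max_le_right hx
  rw [← hfg x hx₁, ← hfg y (hx₁.trans hxy)]
  exact H x y (le_of_max_le_left hx) hxy

lemma AlmostDecreasing.congr (H : AlmostDecreasing f) (hfg : f =ᶠ[atTop] g) :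
    AlmostDecreasing g := by
  obtain ⟨M, hM, x₀, H⟩ := H
  obtain ⟨x₁, hfg⟩ := eventually_atTop.1 hfg
  refine ⟨M, hM, max x₀ x₁, fun x y hx hxy => ?_⟩
  have hx₁ : x₁ ≤ x := le_of_max_le_right hx
  rw [← hfg x hx₁, ← hfg y (hx₁.trans hxy)]
  exact H x y (le_of_max_le_left hx) hxy

lemma AlmostIncreasing.rpow (H : AlmostIncreasing f) (hf : 0 ≤ᶠ[atTop] f) (hp : 0 ≤ p) :
    AlmostIncreasing fun x => f x ^ p := by
  obtain ⟨m, hm, x₀, H⟩ := H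
  obtain ⟨x₁, hf⟩ := eventually_atTop.1 hf
  refine ⟨m ^ p, Real.rpow_pos_of_pos hm p, max x₀ x₁, fun x y hx hxy => ?_⟩
  have hfx : 0 ≤ f x := hf x (le_of_max_le_right hx)
  rw [← Real.mul_rpow hm.le hfx]
  exact Real.rpow_le_rpow (mul_nonneg hm.le hfx) (H x y (le_of_max_le_left hx) hxy) hp

lemma AlmostDecreasing.rpow (H : AlmostDecreasing f) (hf : 0 ≤ᶠ[atTop] f) (hp : 0 ≤ p) :
    AlmostDecreasing fun x => f x ^ p := by
  obtain ⟨M, hM, x₀, H⟩ := H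
  obtain ⟨x₁, hf⟩ := eventually_atTop.1 hf
  refine ⟨M ^ p, Real.rpow_pos_of_pos hM p, max x₀ x₁, fun x y hx hxy => ?_⟩
  have hx₁ : x₁ ≤ x := le_of_max_le_right hx
  rw [← Real.mul_rpow hM.le (hf x hx₁)]
  exact Real.rpow_le_rpow (hf y (hx₁.trans hxy)) (H x y (le_of_max_le_left hx) hxy) hp

lemma almostIncreasing_rpow_iff (hf : 0 ≤ᶠ[atTop] f) (hp : 0 < p) :
    AlmostIncreasing (fun x => f x ^ p) ↔ AlmostIncreasing f :=
  ⟨fun H => (H.rpow (hf.mono fun _ hx => Real.rpow_nonneg hx p) (inv_nonneg.2 hp.le)).congr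
    (hf.mono fun _ hx => Real.rpow_rpow_inv hx hp.ne'), fun H => H.rpow hf hp.le⟩

lemma almostDecreasing_rpow_iff (hf : 0 ≤ᶠ[atTop] f) (hp : 0 < p) :
    AlmostDecreasing (fun x => f x ^ p) ↔ AlmostDecreasing f :=
  ⟨fun H => (H.rpow (hf.mono fun _ hx => Real.rpow_nonneg hx p) (inv_nonneg.2 hp.le)).congr
    (hf.mono fun _ hx => Real.rpow_rpow_inv hx hp.ne'), fun H => H.rpow hf hp.le⟩

end AlmostMonotone

section Dilation

variable {f g : ℝ → ℝ} {c γ : ℝ}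

lemma almostIncreasing_rpow_neg_mul_of_le_comp_mul (hf₀ : 0 ≤ f) (hf : Monotone f)
    (hc : 1 ≤ c) (hγ : 0 ≤ γ) (hfg : ∀ x, 0 < x → f x ≤ g (c * x))
    (hgf : ∀ x, 0 < x → g x ≤ f (c * x))
    (H : AlmostIncreasing fun x => x ^ (-γ) * g x) :
    AlmostIncreasing fun x => x ^ (-γ) * f x := by
  obtain ⟨m, hm, x₀, H⟩ := H
  have hc₀ : 0 < c := zero_lt_one.trans_le hc
  refine ⟨min m 1 * (c * c) ^ (-γ), by positivity, max x₀ 1, fun x y hx hxy => ?_⟩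
  have hx₀ : x₀ ≤ x := le_of_max_le_left hx
  have hx : 0 < x := zero_lt_one.trans_le (le_of_max_le_right hx)
  have hy : 0 < y := hx.trans_le hxy
  have hcx : x ≤ c * x := le_mul_of_one_le_left hx.le hc
  have hfx : 0 ≤ x ^ (-γ) * f x := mul_nonneg (Real.rpow_nonneg hx.le _) (hf₀ x)
  -- For `y ≥ c²x` pass through `g` on `[cx, y/c]`; otherwise `x⁻ᵞ ≤ c²ᵞ y⁻ᵞ` and `f` is monotone.
  rcases le_or_gt (c * c * x) y with hcy | hcy
  · obtain ⟨z, rfl⟩ : ∃ z, y = c * z := ⟨y / c, by field_simp⟩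
    have hxz : c * x ≤ z := le_of_mul_le_mul_left (by linarith) hc₀
    have hz : 0 < z := hx.trans_le (hcx.trans hxz)
    calc min m 1 * (c * c) ^ (-γ) * (x ^ (-γ) * f x)
        ≤ m * (c * c) ^ (-γ) * (x ^ (-γ) * g (c * x)) := by
          gcongr
          · exact min_le_left m 1
          · exact hfg x hx
      _ = c ^ (-γ) * (m * ((c * x) ^ (-γ) * g (c * x))) := by
          rw [Real.mul_rpow hc₀.le hc₀.le, Real.mul_rpow hc₀.le hx.le]; ring
      _ ≤ c ^ (-γ) * (z ^ (-γ) * g z) :=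
          mul_le_mul_of_nonneg_left (H _ _ (hx₀.trans hcx) hxz) (Real.rpow_nonneg hc₀.le _)
      _ ≤ c ^ (-γ) * (z ^ (-γ) * f (c * z)) :=
          mul_le_mul_of_nonneg_left (mul_le_mul_of_nonneg_left (hgf z hz)
            (Real.rpow_nonneg hz.le _)) (Real.rpow_nonneg hc₀.le _)
      _ = (c * z) ^ (-γ) * f (c * z) := by rw [Real.mul_rpow hc₀.le (by linarith)]; ring
  · have hk : 0 ≤ (c * c) ^ (-γ) * x ^ (-γ) := by positivity
    calc min m 1 * (c * c) ^ (-γ) * (x ^ (-γ) * f x)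
        = min m 1 * ((c * c) ^ (-γ) * x ^ (-γ) * f x) := by ring
      _ ≤ 1 * ((c * c) ^ (-γ) * x ^ (-γ) * f y) := mul_le_mul (min_le_right m 1)
          (mul_le_mul_of_nonneg_left (hf hxy) hk) (mul_nonneg hk (hf₀ x)) zero_le_one
      _ = (c * c * x) ^ (-γ) * f y := by rw [Real.mul_rpow (by positivity) hx.le]; ring
      _ ≤ y ^ (-γ) * f y := by
          gcongr ?_ * _
          · exact hf₀ y
          · exact Real.rpow_le_rpow_of_nonpos hy hcy.le (neg_nonpos.2 hγ)

lemma almostDecreasing_rpow_neg_mul_of_le_comp_mul (hc : 1 ≤ c)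
    (hfg : ∀ x, 0 < x → f x ≤ g (c * x)) (hgf : ∀ x, 0 < x → g x ≤ f (c * x))
    (H : AlmostDecreasing fun x => x ^ (-γ) * g x) :
    AlmostDecreasing fun x => x ^ (-γ) * f x := by
  obtain ⟨M, hM, x₀, H⟩ := H
  have hc₀ : 0 < c := zero_lt_one.trans_le hc
  refine ⟨M * (c * c) ^ γ, by positivity, max (c * x₀) 1, fun x y hx hxy => ?_⟩
  obtain ⟨w, rfl⟩ : ∃ w, x = c * w := ⟨x / c, by field_simp⟩
  have hw₀ : x₀ ≤ w := le_of_mul_le_mul_left (le_of_max_le_left hx) hc₀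
  have hw : 0 < w := pos_of_mul_pos_right (zero_lt_one.trans_le (le_of_max_le_right hx)) hc₀.le
  have hy : 0 < y := (mul_pos hc₀ hw).trans_le hxy
  have hwy : w ≤ c * y :=
    (le_mul_of_one_le_left hw.le hc).trans (hxy.trans (le_mul_of_one_le_left hy.le hc))
  calc y ^ (-γ) * f y
      ≤ y ^ (-γ) * g (c * y) := mul_le_mul_of_nonneg_left (hfg y hy) (Real.rpow_nonneg hy.le _)
    _ = c ^ γ * ((c * y) ^ (-γ) * g (c * y)) := by
        rw [Real.mul_rpow hc₀.le hy.le, Real.rpow_neg hc₀.le]; field_simp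
    _ ≤ c ^ γ * (M * (w ^ (-γ) * g w)) :=
        mul_le_mul_of_nonneg_left (H _ _ hw₀ hwy) (Real.rpow_nonneg hc₀.le _)
    _ ≤ c ^ γ * (M * (w ^ (-γ) * f (c * w))) :=
        mul_le_mul_of_nonneg_left (mul_le_mul_of_nonneg_left
          (mul_le_mul_of_nonneg_left (hgf w hw) (Real.rpow_nonneg hw.le _)) hM.le)
          (Real.rpow_nonneg hc₀.le _)
    _ = M * (c * c) ^ γ * ((c * w) ^ (-γ) * f (c * w)) := by
        rw [Real.mul_rpow hc₀.le hc₀.le, Real.mul_rpow hc₀.le hw.le, Real.rpow_neg hc₀.le]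
        field_simp

lemma lowerMat_eq_of_le_comp_mul (hf₀ : 0 ≤ f) (hf : Monotone f) (hg₀ : 0 ≤ g)
    (hg : Monotone g) (hc : 1 ≤ c) (hfg : ∀ x, 0 < x → f x ≤ g (c * x))
    (hgf : ∀ x, 0 < x → g x ≤ f (c * x)) :
    lowerMat f = lowerMat g := by
  have key (γ : NNReal) : AlmostIncreasing (fun x => x ^ (-(γ : ℝ)) * f x) ↔
      AlmostIncreasing (fun x => x ^ (-(γ : ℝ)) * g x) :=
    ⟨almostIncreasing_rpow_neg_mul_of_le_comp_mul hg₀ hg hc γ.2 hgf hfg,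
      almostIncreasing_rpow_neg_mul_of_le_comp_mul hf₀ hf hc γ.2 hfg hgf⟩
  simp only [lowerMat, key]

lemma upperMat_eq_of_le_comp_mul (hc : 1 ≤ c) (hfg : ∀ x, 0 < x → f x ≤ g (c * x))
    (hgf : ∀ x, 0 < x → g x ≤ f (c * x)) : upperMat f = upperMat g := by
  have key (γ : NNReal) : AlmostDecreasing (fun x => x ^ (-(γ : ℝ)) * f x) ↔
      AlmostDecreasing (fun x => x ^ (-(γ : ℝ)) * g x) :=
    ⟨almostDecreasing_rpow_neg_mul_of_le_comp_mul hc hgf hfg,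
      almostDecreasing_rpow_neg_mul_of_le_comp_mul hc hfg hgf⟩
  simp only [upperMat, key]

end Dilation

section Power

variable {f : ℝ → ℝ} {p : ℝ}

lemma rpow_neg_mul_rpow_eventuallyEq (hf : 0 ≤ f) (γ : ℝ) :
    (fun x => (x ^ (-γ) * f x) ^ p) =ᶠ[atTop] fun x => x ^ (-(p * γ)) * f x ^ p :=
  (eventually_ge_atTop 0).mono fun x hx => by
    dsimp only
    rw [Real.mul_rpow (Real.rpow_nonneg hx _) (hf x), ← Real.rpow_mul hx, neg_mul, mul_comm γ]

lemma eventually_nonneg_rpow_neg_mul (hf : 0 ≤ f) (γ : ℝ) :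
    0 ≤ᶠ[atTop] fun x => x ^ (-γ) * f x :=
  (eventually_ge_atTop 0).mono fun x hx => mul_nonneg (Real.rpow_nonneg hx _) (hf x)

lemma almostIncreasing_rpow_neg_mul_rpow_iff (hf : 0 ≤ f) (hp : 0 < p) (γ : ℝ) :
    AlmostIncreasing (fun x => x ^ (-(p * γ)) * f x ^ p) ↔
      AlmostIncreasing fun x => x ^ (-γ) * f x := by
  rw [← almostIncreasing_rpow_iff (eventually_nonneg_rpow_neg_mul hf γ) hp]
  exact ⟨fun H => H.congr (rpow_neg_mul_rpow_eventuallyEq hf γ).symm,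
    fun H => H.congr (rpow_neg_mul_rpow_eventuallyEq hf γ)⟩

lemma almostDecreasing_rpow_neg_mul_rpow_iff (hf : 0 ≤ f) (hp : 0 < p) (γ : ℝ) :
    AlmostDecreasing (fun x => x ^ (-(p * γ)) * f x ^ p) ↔
      AlmostDecreasing fun x => x ^ (-γ) * f x := by
  rw [← almostDecreasing_rpow_iff (eventually_nonneg_rpow_neg_mul hf γ) hp]
  exact ⟨fun H => H.congr (rpow_neg_mul_rpow_eventuallyEq hf γ).symm,
    fun H => H.congr (rpow_neg_mul_rpow_eventuallyEq hf γ)⟩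

lemma setOf_coe_eq_image_mul {p : NNReal} (hp : p ≠ 0) {P Q : NNReal → Prop}
    (hPQ : ∀ γ, P (p * γ) ↔ Q γ) :
    {g : ENNReal | ∃ γ : NNReal, g = γ ∧ P γ} =
      (fun g => (p : ENNReal) * g) '' {g : ENNReal | ∃ γ : NNReal, g = γ ∧ Q γ} := by
  ext g
  constructor
  · rintro ⟨β, rfl, hβ⟩
    refine ⟨(β / p : NNReal), ⟨_, rfl, (hPQ _).1 ?_⟩, ?_⟩
    · rwa [mul_div_cancel₀ _ hp]
    · change (p : ENNReal) * _ = _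
      rw [← ENNReal.coe_mul, mul_div_cancel₀ _ hp]
  · rintro ⟨_, ⟨γ, rfl, hγ⟩, rfl⟩
    exact ⟨p * γ, ENNReal.coe_mul p γ, (hPQ γ).2 hγ⟩

lemma lowerMat_rpow (hf : 0 ≤ f) {p : NNReal} (hp : p ≠ 0) :
    lowerMat (fun x => f x ^ (p : ℝ)) = p * lowerMat f := by
  have hp' : (0 : ℝ) < p := NNReal.coe_pos.2 (pos_iff_ne_zero.2 hp)
  rw [lowerMat, lowerMat, setOf_coe_eq_image_mul hp fun γ => by
    exact_mod_cast almostIncreasing_rpow_neg_mul_rpow_iff hf hp' γ]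
  exact (map_sSup (ENNReal.mulLeftOrderIso p (ENNReal.isUnit_iff.2 ⟨by simpa, by simp⟩)) _).symm

lemma upperMat_rpow (hf : 0 ≤ f) {p : NNReal} (hp : p ≠ 0) :
    upperMat (fun x => f x ^ (p : ℝ)) = p * upperMat f := by
  have hp' : (0 : ℝ) < p := NNReal.coe_pos.2 (pos_iff_ne_zero.2 hp)
  rw [upperMat, upperMat, setOf_coe_eq_image_mul hp fun γ => by
    exact_mod_cast almostDecreasing_rpow_neg_mul_rpow_iff hf hp' γ]
  exact (map_sInf (ENNReal.mulLeftOrderIso p (ENNReal.isUnit_iff.2 ⟨by simpa, by simp⟩)) _).symm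

end Power

theorem stmt_16_general (A : Set ℕ) (h : ℕ) (hh : 1 ≤ h) :
    lowerMat (fun x : ℝ => (sA A h x : ℝ)) =
      (h : ENNReal) * lowerMat (fun x : ℝ => (cntA A x : ℝ)) ∧
    upperMat (fun x : ℝ => (sA A h x : ℝ)) =
      (h : ENNReal) * upperMat (fun x : ℝ => (cntA A x : ℝ)) := by
  have hc : (1 : ℝ) ≤ h := Nat.one_le_cast.2 hh
  have ha₀ : 0 ≤ fun x : ℝ => (cntA A x : ℝ) := fun _ => Nat.cast_nonneg _
  have ha : Monotone fun x : ℝ => (cntA A x : ℝ) := fun _ _ hxy =>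
    Nat.cast_le.2 (cntA_mono A hxy)
  have hs_le (x : ℝ) (hx : 0 < x) : (sA A h x : ℝ) ≤ (cntA A (h * x) : ℝ) ^ (h : ℝ) := by
    rw [Real.rpow_natCast]
    exact_mod_cast (sA_le_cntA_pow A h x).trans
      (Nat.pow_le_pow_left (cntA_mono A (le_mul_of_one_le_left hx.le hc)) h)
  have le_hs (x : ℝ) (_ : 0 < x) : (cntA A x : ℝ) ^ (h : ℝ) ≤ (sA A h (h * x) : ℝ) := by
    rw [Real.rpow_natCast]
    exact_mod_cast cntA_pow_le_sA A h x
  have hlow := lowerMat_rpow ha₀ (Nat.cast_ne_zero.2 (by omega) : (h : NNReal) ≠ 0)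
  have hup := upperMat_rpow ha₀ (Nat.cast_ne_zero.2 (by omega) : (h : NNReal) ≠ 0)
  push_cast at hlow hup
  refine ⟨.trans ?_ hlow, (upperMat_eq_of_le_comp_mul hc hs_le le_hs).trans hup⟩
  exact lowerMat_eq_of_le_comp_mul (fun _ => Nat.cast_nonneg _)
    (fun _ _ hxy => Nat.cast_le.2 (sA_mono A h hxy)) (fun _ => Real.rpow_nonneg (ha₀ _) _)
    (fun _ _ hxy => Real.rpow_le_rpow (ha₀ _) (ha hxy) h.cast_nonneg) hc hs_le le_hs

theorem stmt_16 (A : Set ℕ) (hA : A.Infinite) (h : ℕ) (hh : 1 ≤ h) :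
    lowerMat (fun x : ℝ => (sA A h x : ℝ)) =
      (h : ENNReal) * lowerMat (fun x : ℝ => (cntA A x : ℝ)) ∧
    upperMat (fun x : ℝ => (sA A h x : ℝ)) =
      (h : ENNReal) * upperMat (fun x : ℝ => (cntA A x : ℝ)) :=
  stmt_16_general A h hh
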